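/- arXiv:2408.11011 — 2 statements merged into one kernel-verified Lean document; each statement's English description precedes it below -/
import Mathlib

section
/- Let H and K be complex Hilbert spaces, r ∈ ℝ₊, and let T₁, …, T_ℓ be d-tuples of bounded linear operators on H, with T_k = (T_{k1}, …, T_{kd}). Let X₁, …, X_ℓ : K → H be bounded linear operators with Σ_{k=1}^ℓ X_k* X_k = 1_K, and define the d-tuple S = (S₁, …, S_d) on K by S_j = Σ_{k=1}^ℓ X_k* T_{kj} X_k. If ρ(T_k) ≤ r for every k, then ρ(S) ≤ r; likewise, if ω(T_k) ≤ r for every k, then ω(S) ≤ r. In particular, any operator convex combination of Toeplitz-contractive d-tuples is Toeplitz-contractive. -/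
/-!
Conjugating positive block matrices by the `Xₖ` and summing over `k` preserves positivity, and
`∑ₖ Xₖ* Xₖ = 1` turns the diagonal `α • 1` of each `𝒯_α(Tₖ)` into the diagonal `α • 1` of
`𝒯_α(S)`, so `𝒯_α(S) = ∑ₖ Xₖ* 𝒯_α(Tₖ) Xₖ` is positive as soon as every `𝒯_α(Tₖ)` is. In the
same way `𝒯_{α,ξ}(S) = ∑ₖ 𝒯_{α,Xₖξ}(Tₖ)`, and positivity of `𝒯_{α,η}` for unit vectors `η`
extends to all `η` by homogeneity. Both positivity conditions are monotone in `α` and hold for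
large `α`, so `ρ(Tₖ) ≤ r` (resp. `ω(Tₖ) ≤ r`) for all `k` gives the condition for every `Tₖ` at
each `r + ε`, hence for `S`.
-/

open scoped ComplexOrder

noncomputable section

variable {H : Type*} [NormedAddCommGroup H] [InnerProductSpace ℂ H] [CompleteSpace H]

/-- The `(i, j)` entry of the `(d+1) × (d+1)` block Toeplitz operator matrix associated to a
`d`-tuple `T` of bounded operators on `H`, with diagonal entries `α • 1`: it is `α • 1` if
`i = j`, `T_{i-j}` if `i > j`, and `(T_{j-i})*` if `i < j`. -/
def tEntry {d : ℕ} (T : Fin d → H →L[ℂ] H) (α : ℂ) (i j : Fin (d + 1)) : H →L[ℂ] H :=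
  if _h1 : (i : ℕ) = (j : ℕ) then α • (1 : H →L[ℂ] H)
  else if _h2 : (j : ℕ) < (i : ℕ) then
    T ⟨(i : ℕ) - (j : ℕ) - 1, by have := i.isLt; omega⟩
  else
    ContinuousLinearMap.adjoint (T ⟨(j : ℕ) - (i : ℕ) - 1, by have := j.isLt; omega⟩)

/-- Positivity of a block operator matrix `M`, expressed through its quadratic form on the
direct sum of copies of `H`: for every vector `x = (x_i)`, `∑ i j, ⟪M i j (x j), x i⟫ ≥ 0`. -/
def IsPosBlockMatrix {ι : Type*} [Fintype ι] (M : ι → ι → (H →L[ℂ] H)) : Prop :=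
  ∀ x : ι → H, 0 ≤ ∑ i, ∑ j, (inner ℂ (M i j (x j)) (x i) : ℂ)

/-- A `d`-tuple of operators is Toeplitz-contractive if its block Toeplitz operator matrix
(with 1's on the diagonal) is a positive operator on `⊕_1^{d+1} H`. -/
def ToeplitzContractive {d : ℕ} (T : Fin d → H →L[ℂ] H) : Prop :=
  IsPosBlockMatrix (tEntry T 1)

/-- The Toeplitz modulus `ρ(T)` of a `d`-tuple `T`: the infimum of the `α ∈ ℝ₊` for which the
block Toeplitz operator matrix `𝒯_α` (with `α • 1` on the diagonal) is positive. -/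
def toeplitzModulus {d : ℕ} (T : Fin d → H →L[ℂ] H) : ℝ :=
  sInf {α : ℝ | 0 ≤ α ∧ IsPosBlockMatrix (tEntry T (α : ℂ))}

/-- The scalar `(d+1) × (d+1)` Toeplitz matrix `𝒯_{α,ξ}` obtained from the block Toeplitz
matrix of `T` by applying the vector state `X ↦ ⟨Xξ, ξ⟩` entrywise; for a unit vector `ξ`
its diagonal entries are `α`, its `(i,j)` entry for `i > j` is `⟨T_{i-j} ξ, ξ⟩`, and its
`(i,j)` entry for `i < j` is `⟨(T_{j-i})* ξ, ξ⟩`. -/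
def tScalarMatrix {d : ℕ} (T : Fin d → H →L[ℂ] H) (α : ℝ) (ξ : H) :
    Matrix (Fin (d + 1)) (Fin (d + 1)) ℂ :=
  Matrix.of fun i j => (inner ℂ ξ (tEntry T (α : ℂ) i j ξ) : ℂ)

/-- The Toeplitz numerical radius `ω(T)` of a `d`-tuple `T`: the infimum of the `α ∈ ℝ₊` for
which the scalar Toeplitz matrix `𝒯_{α,ξ}` is positive semidefinite for every unit vector `ξ`. -/
def toeplitzNumRadius {d : ℕ} (T : Fin d → H →L[ℂ] H) : ℝ :=
  sInf {α : ℝ | 0 ≤ α ∧ ∀ ξ : H, ‖ξ‖ = 1 → (tScalarMatrix T α ξ).PosSemidef}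

variable {K : Type*} [NormedAddCommGroup K] [InnerProductSpace ℂ K] [CompleteSpace K]

open scoped InnerProduct InnerProductSpace
open ContinuousLinearMap

section BlockMatrix

variable {E F : Type*} [NormedAddCommGroup E] [InnerProductSpace ℂ E]
  [NormedAddCommGroup F] [InnerProductSpace ℂ F] {ι : Type*} [Fintype ι]

-- Mathlib's inner product is conjugate-linear on the left, so this is `conj ⟨M x, x⟩`.
def blockForm (M : Matrix ι ι (E →L[ℂ] E)) (x : ι → E) : ℂ :=
  ∑ i, ∑ j, ⟪M i j (x j), x i⟫_ℂ

theorem blockForm_add (M N : Matrix ι ι (E →L[ℂ] E)) (x : ι → E) :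
    blockForm (M + N) x = blockForm M x + blockForm N x := by
  simp only [blockForm, Matrix.add_apply, add_apply, inner_add_left, Finset.sum_add_distrib]

theorem blockForm_smul_one [DecidableEq ι] (c : ℝ) (x : ι → E) :
    blockForm ((c : ℂ) • 1 : Matrix ι ι (E →L[ℂ] E)) x = ((c * ∑ i, ‖x i‖ ^ 2 : ℝ) : ℂ) := by
  rw [blockForm, Complex.ofReal_mul, Complex.ofReal_sum, Finset.mul_sum]
  refine Finset.sum_congr rfl fun i _ => ?_
  rw [Finset.sum_eq_single i (fun j _ hji => by simp [Matrix.one_apply_ne' hji]) (by simp)]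
  simp [inner_self_eq_norm_sq_to_K]

theorem conj_blockForm [CompleteSpace E] {M : Matrix ι ι (E →L[ℂ] E)} (hM : M.IsHermitian)
    (x : ι → E) : starRingEnd ℂ (blockForm M x) = blockForm M x := by
  simp only [blockForm, map_sum, inner_conj_symm]
  rw [Finset.sum_comm]
  refine Finset.sum_congr rfl fun i _ => Finset.sum_congr rfl fun j _ => ?_
  rw [← hM.apply j i, star_eq_adjoint, adjoint_inner_right]

theorem norm_blockForm_le (M : Matrix ι ι (E →L[ℂ] E)) (x : ι → E) :
    ‖blockForm M x‖ ≤ (∑ i, ∑ j, ‖M i j‖) * ∑ i, ‖x i‖ ^ 2 := by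
  have hsq : ∀ i, ‖x i‖ ^ 2 ≤ ∑ l, ‖x l‖ ^ 2 := fun i =>
    Finset.single_le_sum (f := fun l => ‖x l‖ ^ 2) (fun _ _ => by positivity) (Finset.mem_univ i)
  have hentry : ∀ i j, ‖⟪M i j (x j), x i⟫_ℂ‖ ≤ ‖M i j‖ * ∑ l, ‖x l‖ ^ 2 := fun i j =>
    calc ‖⟪M i j (x j), x i⟫_ℂ‖ ≤ ‖M i j‖ * ‖x j‖ * ‖x i‖ :=
          (norm_inner_le_norm _ _).trans (by gcongr; exact (M i j).le_opNorm _)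
      _ ≤ ‖M i j‖ * ∑ l, ‖x l‖ ^ 2 := by
          rw [mul_assoc]
          gcongr
          nlinarith [sq_nonneg (‖x i‖ - ‖x j‖), hsq i, hsq j]
  calc ‖blockForm M x‖ ≤ ∑ i, ∑ j, ‖⟪M i j (x j), x i⟫_ℂ‖ :=
        (norm_sum_le _ _).trans (Finset.sum_le_sum fun i _ => norm_sum_le _ _)
    _ ≤ ∑ i, ∑ j, ‖M i j‖ * ∑ l, ‖x l‖ ^ 2 :=
        Finset.sum_le_sum fun i _ => Finset.sum_le_sum fun j _ => hentry i j
    _ = _ := by simp only [Finset.sum_mul]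

theorem blockForm_sum_compress [CompleteSpace E] [CompleteSpace F] {κ : Type*} [Fintype κ]
    (M : κ → Matrix ι ι (E →L[ℂ] E)) (X : κ → F →L[ℂ] E) (x : ι → F) :
    blockForm (fun i j : ι => ∑ k, (X k)† ∘L (M k i j ∘L X k)) x
      = ∑ k, blockForm (M k) fun i => X k (x i) := by
  simp only [blockForm, sum_apply, comp_apply, sum_inner, adjoint_inner_left]
  rw [Finset.sum_comm (γ := κ)]
  exact Finset.sum_congr rfl fun i _ => Finset.sum_comm

theorem isPosBlockMatrix_iff_blockForm (M : Matrix ι ι (E →L[ℂ] E)) :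
    IsPosBlockMatrix M ↔ ∀ x, 0 ≤ blockForm M x := Iff.rfl

theorem IsPosBlockMatrix.add {M N : Matrix ι ι (E →L[ℂ] E)} (hM : IsPosBlockMatrix M)
    (hN : IsPosBlockMatrix N) : IsPosBlockMatrix (M + N : Matrix ι ι (E →L[ℂ] E)) := by
  refine (isPosBlockMatrix_iff_blockForm _).2 fun x => ?_
  rw [blockForm_add]
  exact add_nonneg (hM x) (hN x)

theorem isPosBlockMatrix_smul_one [DecidableEq ι] {c : ℝ} (hc : 0 ≤ c) :
    IsPosBlockMatrix ((c : ℂ) • 1 : Matrix ι ι (E →L[ℂ] E)) := by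
  refine (isPosBlockMatrix_iff_blockForm _).2 fun x => ?_
  rw [blockForm_smul_one]
  exact_mod_cast mul_nonneg hc (Finset.sum_nonneg fun i _ => by positivity)

theorem IsPosBlockMatrix.sum_compress [CompleteSpace E] [CompleteSpace F] {κ : Type*} [Fintype κ]
    {M : κ → Matrix ι ι (E →L[ℂ] E)} (hM : ∀ k, IsPosBlockMatrix (M k)) (X : κ → F →L[ℂ] E) :
    IsPosBlockMatrix fun i j : ι => ∑ k, (X k)† ∘L (M k i j ∘L X k) := by
  refine (isPosBlockMatrix_iff_blockForm _).2 fun x => ?_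
  rw [blockForm_sum_compress]
  exact Finset.sum_nonneg fun k _ => hM k _

theorem Matrix.IsHermitian.isPosBlockMatrix_add_smul_one [CompleteSpace E] [DecidableEq ι]
    {M : Matrix ι ι (E →L[ℂ] E)} (hM : M.IsHermitian) :
    IsPosBlockMatrix (M + ((∑ i, ∑ j, ‖M i j‖ : ℝ) : ℂ) • 1 : Matrix ι ι (E →L[ℂ] E)) := by
  refine (isPosBlockMatrix_iff_blockForm _).2 fun x => ?_
  set C := ∑ i, ∑ j, ‖M i j‖
  have hre : -(C * ∑ i, ‖x i‖ ^ 2) ≤ (blockForm M x).re := by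
    have := (abs_le.mp ((Complex.abs_re_le_norm _).trans (norm_blockForm_le M x))).1
    linarith
  have him : (blockForm M x).im = 0 := Complex.conj_eq_iff_im.mp (conj_blockForm hM x)
  rw [blockForm_add, blockForm_smul_one, Complex.nonneg_iff]
  constructor
  · rw [Complex.add_re, Complex.ofReal_re]
    linarith
  · rw [Complex.add_im, Complex.ofReal_im, him, add_zero]

end BlockMatrix

section ToeplitzBlock

variable {d : ℕ}

theorem isHermitian_tEntry (T : Fin d → H →L[ℂ] H) (α : ℝ) :
    (Matrix.of (tEntry T α)).IsHermitian := by
  ext i j : 2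
  rw [Matrix.conjTranspose_apply, Matrix.of_apply, Matrix.of_apply, star_eq_adjoint]
  unfold tEntry
  rcases lt_trichotomy (i : ℕ) j with h | h | h
  · rw [dif_neg (by omega), dif_pos h, dif_neg (by omega), dif_neg (by omega)]
  · rw [dif_pos h.symm, dif_pos h, ← star_eq_adjoint, star_smul, star_one, Complex.star_def,
      Complex.conj_ofReal]
  · rw [dif_neg (by omega), dif_neg (by omega), dif_neg (by omega), dif_pos h, adjoint_adjoint]

theorem tEntry_add (T : Fin d → H →L[ℂ] H) (α β : ℂ) :
    Matrix.of (tEntry T (α + β)) = Matrix.of (tEntry T α) + β • 1 := by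
  ext i j : 1
  rw [Matrix.add_apply, Matrix.smul_apply, Matrix.of_apply, Matrix.of_apply]
  unfold tEntry
  by_cases h : (i : ℕ) = j
  · obtain rfl := Fin.ext h
    rw [dif_pos rfl, dif_pos rfl, Matrix.one_apply_eq, add_smul]
  · rw [dif_neg h, dif_neg h, Matrix.one_apply_ne (fun hij => h (congrArg Fin.val hij)),
      smul_zero, add_zero]

theorem isPosBlockMatrix_tEntry_mono (T : Fin d → H →L[ℂ] H) :
    Monotone fun α : ℝ => IsPosBlockMatrix (tEntry T α) := fun α β hαβ hα => by
  have hβ : ((β : ℝ) : ℂ) = α + ((β - α : ℝ) : ℂ) := by push_cast; ring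
  change IsPosBlockMatrix (Matrix.of (tEntry T β))
  rw [hβ, tEntry_add]
  exact IsPosBlockMatrix.add hα (isPosBlockMatrix_smul_one (sub_nonneg.2 hαβ))

theorem exists_isPosBlockMatrix_tEntry (T : Fin d → H →L[ℂ] H) :
    ∃ α : ℝ, 0 ≤ α ∧ IsPosBlockMatrix (tEntry T α) := by
  refine ⟨∑ i, ∑ j, ‖tEntry T 0 i j‖, by positivity, ?_⟩
  change IsPosBlockMatrix (Matrix.of (tEntry T _))
  rw [← zero_add ((_ : ℝ) : ℂ), tEntry_add]
  simpa using (isHermitian_tEntry T 0).isPosBlockMatrix_add_smul_one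

end ToeplitzBlock

section OperatorConvexCombination

variable {d : ℕ} {ι κ : Type*} [Fintype κ]

def operatorConvexCombination (T : κ → ι → H →L[ℂ] H) (X : κ → K →L[ℂ] H) : ι → K →L[ℂ] K :=
  fun j => ∑ k, (X k)† ∘L (T k j ∘L X k)

theorem tEntry_operatorConvexCombination {X : κ → K →L[ℂ] H} (hX : ∑ k, (X k)† ∘L X k = 1)
    (T : κ → Fin d → H →L[ℂ] H) (α : ℂ) :
    tEntry (operatorConvexCombination T X) α
      = fun i j => ∑ k, (X k)† ∘L (tEntry (T k) α i j ∘L X k) := by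
  ext1 i; ext1 j
  unfold tEntry operatorConvexCombination
  rcases lt_trichotomy (i : ℕ) j with h | h | h
  · simp only [dif_neg (show (i : ℕ) ≠ j by omega), dif_neg (show ¬(j : ℕ) < i by omega),
      map_sum, adjoint_comp, adjoint_adjoint, comp_assoc]
  · simp only [dif_pos h, smul_comp, one_def, id_comp, comp_smul, ← Finset.smul_sum, hX]
  · simp only [dif_neg (show (i : ℕ) ≠ j by omega), dif_pos h]

theorem IsPosBlockMatrix.tEntry_operatorConvexCombination {X : κ → K →L[ℂ] H}
    (hX : ∑ k, (X k)† ∘L X k = 1) {T : κ → Fin d → H →L[ℂ] H} {α : ℂ}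
    (hT : ∀ k, IsPosBlockMatrix (tEntry (T k) α)) :
    IsPosBlockMatrix (tEntry (operatorConvexCombination T X) α) := by
  rw [_root_.tEntry_operatorConvexCombination hX]
  exact IsPosBlockMatrix.sum_compress hT X

end OperatorConvexCombination

section BlockState

open scoped Matrix

variable {E F : Type*} [NormedAddCommGroup E] [InnerProductSpace ℂ E]
  [NormedAddCommGroup F] [InnerProductSpace ℂ F] {ι : Type*}

def blockState (M : Matrix ι ι (E →L[ℂ] E)) (ξ : E) : Matrix ι ι ℂ :=
  M.map fun A => ⟪ξ, A ξ⟫_ℂ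

theorem blockState_add (M N : Matrix ι ι (E →L[ℂ] E)) (ξ : E) :
    blockState (M + N) ξ = blockState M ξ + blockState N ξ := by
  ext i j
  simp [blockState]

theorem blockState_smul_one [DecidableEq ι] (c : ℂ) (ξ : E) :
    blockState (c • 1 : Matrix ι ι (E →L[ℂ] E)) ξ = (c * ‖ξ‖ ^ 2) • 1 := by
  ext i j
  rcases eq_or_ne i j with rfl | hij
  · simp [blockState, inner_self_eq_norm_sq_to_K]
  · simp [blockState, hij]

theorem blockState_smul (M : Matrix ι ι (E →L[ℂ] E)) (c : ℂ) (ξ : E) :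
    blockState M (c • ξ) = (starRingEnd ℂ c * c) • blockState M ξ := by
  ext i j
  simp [blockState]
  ring

theorem blockState_sum_compress [Fintype ι] [CompleteSpace E] [CompleteSpace F]
    {κ : Type*} [Fintype κ] (M : κ → Matrix ι ι (E →L[ℂ] E)) (X : κ → F →L[ℂ] E) (ξ : F) :
    blockState (fun i j : ι => ∑ k, (X k)† ∘L (M k i j ∘L X k)) ξ
      = ∑ k, blockState (M k) (X k ξ) := by
  ext i j
  rw [Matrix.sum_apply]
  change ⟪ξ, (∑ k, (X k)† ∘L (M k i j ∘L X k)) ξ⟫_ℂ = ∑ k, ⟪X k ξ, M k i j (X k ξ)⟫_ℂ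
  simp only [sum_apply, comp_apply, inner_sum, adjoint_inner_right]

theorem Matrix.IsHermitian.blockState [CompleteSpace E] {M : Matrix ι ι (E →L[ℂ] E)}
    (hM : M.IsHermitian) (ξ : E) : (blockState M ξ).IsHermitian := by
  ext i j
  rw [Matrix.conjTranspose_apply, _root_.blockState, Matrix.map_apply, Matrix.map_apply,
    ← hM.apply i j, star_eq_adjoint, Complex.star_def, inner_conj_symm, adjoint_inner_right]

theorem dotProduct_blockState_mulVec [Fintype ι] (M : Matrix ι ι (E →L[ℂ] E)) (ξ : E)
    (x : ι → ℂ) :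
    star x ⬝ᵥ (blockState M ξ *ᵥ x) = starRingEnd ℂ (blockForm M fun i => x i • ξ) := by
  simp only [dotProduct, Matrix.mulVec, blockState, blockForm, Matrix.map_apply, Finset.mul_sum,
    map_sum, map_smul, inner_smul_left, inner_smul_right, map_mul, Complex.conj_conj,
    inner_conj_symm, Pi.star_apply, Complex.star_def]
  exact Finset.sum_congr rfl fun i _ => Finset.sum_congr rfl fun j _ => by ring

theorem IsPosBlockMatrix.posSemidef_blockState [Fintype ι] [CompleteSpace E]
    {M : Matrix ι ι (E →L[ℂ] E)} (hM : M.IsHermitian) (hpos : IsPosBlockMatrix M) (ξ : E) :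
    (blockState M ξ).PosSemidef :=
  .of_dotProduct_mulVec_nonneg (hM.blockState ξ) fun x => by
    rw [dotProduct_blockState_mulVec]
    exact star_nonneg_iff.2 (hpos _)

theorem posSemidef_blockState_of_norm_eq_one [Fintype ι] {M : Matrix ι ι (E →L[ℂ] E)}
    (h : ∀ ξ : E, ‖ξ‖ = 1 → (blockState M ξ).PosSemidef) (η : E) :
    (blockState M η).PosSemidef := by
  rcases eq_or_ne η 0 with rfl | hη
  · have : blockState M (0 : E) = 0 := by ext; simp [blockState]
    exact this ▸ .zero
  · have hn : (‖η‖ : ℂ) ≠ 0 := by exact_mod_cast norm_ne_zero_iff.2 hη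
    have hunit : ‖(‖η‖⁻¹ : ℂ) • η‖ = 1 := by
      rw [norm_smul, norm_inv, Complex.norm_real, norm_norm,
        inv_mul_cancel₀ (norm_ne_zero_iff.2 hη)]
    rw [← smul_inv_smul₀ hn η, blockState_smul]
    exact (h _ hunit).smul (star_mul_self_nonneg _)

end BlockState

section ToeplitzState

variable {d : ℕ}

theorem tScalarMatrix_eq_blockState (T : Fin d → H →L[ℂ] H) (α : ℝ) (ξ : H) :
    tScalarMatrix T α ξ = blockState (Matrix.of (tEntry T α)) ξ := rfl

theorem posSemidef_tScalarMatrix_mono (T : Fin d → H →L[ℂ] H) (ξ : H) :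
    Monotone fun α : ℝ => (tScalarMatrix T α ξ).PosSemidef := fun α β hαβ hα => by
  have hβ : ((β : ℝ) : ℂ) = α + ((β - α : ℝ) : ℂ) := by push_cast; ring
  simp only [tScalarMatrix_eq_blockState] at hα ⊢
  rw [hβ, tEntry_add, blockState_add, blockState_smul_one]
  refine hα.add (Matrix.PosSemidef.one.smul ?_)
  exact_mod_cast mul_nonneg (sub_nonneg.2 hαβ) (sq_nonneg ‖ξ‖)

theorem IsPosBlockMatrix.posSemidef_tScalarMatrix {T : Fin d → H →L[ℂ] H} {α : ℝ}
    (h : IsPosBlockMatrix (tEntry T α)) (ξ : H) : (tScalarMatrix T α ξ).PosSemidef :=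
  IsPosBlockMatrix.posSemidef_blockState (isHermitian_tEntry T α) h ξ

variable {κ : Type*} [Fintype κ]

theorem tScalarMatrix_operatorConvexCombination {X : κ → K →L[ℂ] H}
    (hX : ∑ k, (X k)† ∘L X k = 1) (T : κ → Fin d → H →L[ℂ] H) (α : ℝ) (ξ : K) :
    tScalarMatrix (operatorConvexCombination T X) α ξ = ∑ k, tScalarMatrix (T k) α (X k ξ) := by
  simp only [tScalarMatrix_eq_blockState, tEntry_operatorConvexCombination hX]
  exact blockState_sum_compress _ X ξ

theorem posSemidef_tScalarMatrix_operatorConvexCombination {X : κ → K →L[ℂ] H}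
    (hX : ∑ k, (X k)† ∘L X k = 1) {T : κ → Fin d → H →L[ℂ] H} {α : ℝ}
    (hT : ∀ k, ∀ ξ : H, ‖ξ‖ = 1 → (tScalarMatrix (T k) α ξ).PosSemidef) (ξ : K) :
    (tScalarMatrix (operatorConvexCombination T X) α ξ).PosSemidef := by
  rw [tScalarMatrix_operatorConvexCombination hX]
  exact Matrix.posSemidef_sum _ fun k _ => posSemidef_blockState_of_norm_eq_one (hT k) _

end ToeplitzState

theorem sInf_setOf_le_of_forall_sInf_le {κ : Type*} {P : κ → ℝ → Prop} {Q : ℝ → Prop} {r : ℝ}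
    (hr : 0 ≤ r) (hP : ∀ k, Monotone (P k)) (hne : ∀ k, ∃ α, 0 ≤ α ∧ P k α)
    (hPQ : ∀ α, (∀ k, P k α) → Q α) (h : ∀ k, sInf {α | 0 ≤ α ∧ P k α} ≤ r) :
    sInf {α | 0 ≤ α ∧ Q α} ≤ r := by
  refine le_of_forall_pos_le_add fun ε hε =>
    csInf_le ⟨0, fun _ ha => ha.1⟩ ⟨by positivity, hPQ _ fun k => ?_⟩
  obtain ⟨a, ha, hlt⟩ := (csInf_lt_iff ⟨0, fun _ ha => ha.1⟩ (hne k)).1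
    ((h k).trans_lt (lt_add_of_pos_right r hε))
  exact hP k hlt.le ha.2

/-- operator convex combinations. If `X₁, …, X_ℓ : K → H` satisfy
`∑ₖ Xₖ* Xₖ = 1_K` and `S_j = ∑ₖ Xₖ* T_{kj} Xₖ`, then `ρ(Tₖ) ≤ r` for all `k` implies
`ρ(S) ≤ r`, and `ω(Tₖ) ≤ r` for all `k` implies `ω(S) ≤ r`; in particular an operator convex
combination of Toeplitz-contractive `d`-tuples is Toeplitz-contractive. -/
theorem toeplitz_operator_convex_combination
    {d ℓ : ℕ} (r : ℝ) (hr : 0 ≤ r)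
    (T : Fin ℓ → Fin d → H →L[ℂ] H) (X : Fin ℓ → K →L[ℂ] H)
    (hX : ∑ k : Fin ℓ, (ContinuousLinearMap.adjoint (X k)).comp (X k) = 1) :
    ((∀ k : Fin ℓ, toeplitzModulus (T k) ≤ r) →
        toeplitzModulus (fun j : Fin d =>
          ∑ k : Fin ℓ, (ContinuousLinearMap.adjoint (X k)).comp ((T k j).comp (X k))) ≤ r) ∧
    ((∀ k : Fin ℓ, toeplitzNumRadius (T k) ≤ r) →
        toeplitzNumRadius (fun j : Fin d =>
          ∑ k : Fin ℓ, (ContinuousLinearMap.adjoint (X k)).comp ((T k j).comp (X k))) ≤ r) ∧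
    ((∀ k : Fin ℓ, ToeplitzContractive (T k)) →
        ToeplitzContractive (fun j : Fin d =>
          ∑ k : Fin ℓ, (ContinuousLinearMap.adjoint (X k)).comp ((T k j).comp (X k)))) := by
  refine ⟨fun hρ => ?_, fun hω => ?_, fun hT => ?_⟩
  · exact sInf_setOf_le_of_forall_sInf_le hr (fun k => isPosBlockMatrix_tEntry_mono (T k))
      (fun k => exists_isPosBlockMatrix_tEntry (T k))
      (fun α => IsPosBlockMatrix.tEntry_operatorConvexCombination hX) hρ
  · refine sInf_setOf_le_of_forall_sInf_le hr
      (P := fun k α => ∀ ξ : H, ‖ξ‖ = 1 → (tScalarMatrix (T k) α ξ).PosSemidef)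
      (fun k α β hαβ hα ξ hξ => posSemidef_tScalarMatrix_mono (T k) ξ hαβ (hα ξ hξ))
      (fun k => ?_) (fun α hα ξ _ => posSemidef_tScalarMatrix_operatorConvexCombination hX hα ξ) hω
    obtain ⟨α, hα, hpos⟩ := exists_isPosBlockMatrix_tEntry (T k)
    exact ⟨α, hα, fun ξ _ => hpos.posSemidef_tScalarMatrix ξ⟩
  · exact IsPosBlockMatrix.tEntry_operatorConvexCombination hX hT
end
end

section
/- For every positive integer d there exists a constant c_d ≥ 2 such that for every complex Hilbert space H and every d-tuple T = (T₁, …, T_d) of bounded linear operators on H, ρ(T) ≤ c_d · ω(T), where ρ is the Toeplitz modulus and ω is the Toeplitz numerical radius. -/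
open scoped ComplexOrder

noncomputable section

variable {H : Type*} [NormedAddCommGroup H] [InnerProductSpace ℂ H] [CompleteSpace H]

/-!
For a unit vector `ξ`, positivity of the `2 × 2` principal minor of `𝒯_{α,ξ}` on the indices
`0, k` gives `|⟨T_k ξ, ξ⟩| ≤ α`, so every `T_k` has numerical radius at most `ω(T)`, and by
polarization `|⟨T_k u, v⟩| ≤ ω(T) (‖u‖² + ‖v‖²)`. In the quadratic form of `𝒯_α` each
off-diagonal block thus costs at most `ω(T) (‖x_i‖² + ‖x_j‖²)`; these costs add up to
`2d ω(T) ∑ ‖x_i‖²`, which the diagonal term `α ∑ ‖x_i‖²` absorbs once `α ≥ 2d ω(T)`.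
So `c_d = 2d` works.
-/

theorem Matrix.PosSemidef.apply_mul_apply_le {𝕜 n : Type*} [RCLike 𝕜] [Fintype n]
    {M : Matrix n n 𝕜} (hM : M.PosSemidef) (i j : n) : M i j * M j i ≤ M i i * M j j := by
  have := (hM.submatrix ![i, j]).det_nonneg
  rwa [Matrix.det_fin_two, sub_nonneg] at this

section InnerProductSpace

variable {E : Type*} [NormedAddCommGroup E] [InnerProductSpace ℂ E]

theorem norm_inner_apply_le_opNorm_mul_add_sq (A : E →L[ℂ] E) (u v : E) :
    ‖inner ℂ (A u) v‖ ≤ ‖A‖ * (‖u‖ ^ 2 + ‖v‖ ^ 2) :=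
  calc ‖inner ℂ (A u) v‖ ≤ ‖A‖ * ‖u‖ * ‖v‖ :=
        (norm_inner_le_norm _ _).trans (by gcongr; exact A.le_opNorm u)
    _ ≤ ‖A‖ * (‖u‖ ^ 2 + ‖v‖ ^ 2) := by
      rw [mul_assoc]
      gcongr
      nlinarith [sq_nonneg (‖u‖ - ‖v‖), mul_nonneg (norm_nonneg u) (norm_nonneg v)]

theorem norm_inner_map_self_le_of_norm_eq_one {K : ℝ} (A : E →ₗ[ℂ] E)
    (h : ∀ ξ : E, ‖ξ‖ = 1 → ‖inner ℂ (A ξ) ξ‖ ≤ K) (w : E) :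
    ‖inner ℂ (A w) w‖ ≤ K * ‖w‖ ^ 2 := by
  rcases eq_or_ne w 0 with rfl | hw
  · simp
  have hw' : 0 < ‖w‖ := norm_pos_iff.2 hw
  have := h _ (norm_smul_inv_norm (𝕜 := ℂ) hw)
  rw [map_smul, inner_smul_left, inner_smul_right, norm_mul, norm_mul, RCLike.norm_conj,
    norm_inv, RCLike.norm_ofReal, abs_norm, ← mul_assoc, ← sq, inv_pow,
    inv_mul_le_iff₀ (by positivity)] at this
  linarith

theorem norm_inner_map_le_of_norm_inner_map_self_le {K : ℝ} (A : E →ₗ[ℂ] E)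
    (h : ∀ w : E, ‖inner ℂ (A w) w‖ ≤ K * ‖w‖ ^ 2) (u v : E) :
    ‖inner ℂ (A u) v‖ ≤ K * (‖u‖ ^ 2 + ‖v‖ ^ 2) := by
  have hpar (z : E) : ‖u + z‖ ^ 2 + ‖u - z‖ ^ 2 = 2 * (‖u‖ ^ 2 + ‖z‖ ^ 2) := by
    simpa [sq] using parallelogram_law_with_norm ℂ u z
  have hIv : ‖Complex.I • v‖ = ‖v‖ := by rw [norm_smul, Complex.norm_I, one_mul]
  have htri (a b c e : ℂ) :
      ‖a - b - Complex.I * c + Complex.I * e‖ ≤ ‖a‖ + ‖b‖ + ‖c‖ + ‖e‖ := by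
    have := norm_add_le (a - b - Complex.I * c) (Complex.I * e)
    have := norm_sub_le (a - b) (Complex.I * c)
    have := norm_sub_le a b
    simp only [norm_mul, Complex.norm_I, one_mul] at *
    linarith
  rw [inner_map_polarization', norm_div, Complex.norm_ofNat, div_le_iff₀ four_pos]
  calc _ ≤ ‖inner ℂ (A (u + v)) (u + v)‖ + ‖inner ℂ (A (u - v)) (u - v)‖
          + ‖inner ℂ (A (u + Complex.I • v)) (u + Complex.I • v)‖
          + ‖inner ℂ (A (u - Complex.I • v)) (u - Complex.I • v)‖ := htri _ _ _ _
    _ ≤ K * ‖u + v‖ ^ 2 + K * ‖u - v‖ ^ 2 + K * ‖u + Complex.I • v‖ ^ 2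
          + K * ‖u - Complex.I • v‖ ^ 2 := by gcongr <;> apply h
    _ = K * (‖u‖ ^ 2 + ‖v‖ ^ 2) * 4 := by
        linear_combination K * hpar v + K * hpar (Complex.I • v) + 2 * K * congrArg (· ^ 2) hIv

end InnerProductSpace

section BlockMatrix

variable {E ι : Type*} [NormedAddCommGroup E] [InnerProductSpace ℂ E] [Fintype ι]
  {M : ι → ι → E →L[ℂ] E}

theorem isPosBlockMatrix_of_forall_re_nonneg
    (hM : ∀ i j u v, inner ℂ (M i j u) v = inner ℂ u (M j i v))
    (h : ∀ x : ι → E, 0 ≤ (∑ i, ∑ j, inner ℂ (M i j (x j)) (x i)).re) :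
    IsPosBlockMatrix M := by
  intro x
  have hreal : (starRingEnd ℂ) (∑ i, ∑ j, inner ℂ (M i j (x j)) (x i))
      = ∑ i, ∑ j, inner ℂ (M i j (x j)) (x i) := by
    simp only [map_sum, inner_conj_symm, hM]
    exact Finset.sum_comm
  rw [← Complex.conj_eq_iff_re.mp hreal]
  exact Complex.zero_le_real.mpr (h x)

theorem isPosBlockMatrix_of_norm_inner_offDiag_le {α K : ℝ}
    (hM : ∀ i j u v, inner ℂ (M i j u) v = inner ℂ u (M j i v))
    (hdiag : ∀ i, M i i = (α : ℂ) • 1)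
    (hoff : ∀ i j, i ≠ j → ∀ u v, ‖inner ℂ (M i j u) v‖ ≤ K * (‖u‖ ^ 2 + ‖v‖ ^ 2))
    (hα : 2 * (Fintype.card ι - 1) * K ≤ α) :
    IsPosBlockMatrix M := by
  classical
  refine isPosBlockMatrix_of_forall_re_nonneg hM fun x => ?_
  set a : ι → ℝ := fun i => ‖x i‖ ^ 2
  -- a lower bound for each entry, exact on the diagonal, whose double sum is explicit
  have hentry (i j : ι) : -K * (a j + a i) + (if i = j then (α + 2 * K) * a i else 0)
      ≤ (inner ℂ (M i j (x j)) (x i)).re := by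
    split_ifs with hij
    · subst hij
      rw [hdiag, smul_apply, one_apply_eq_self, inner_smul_left, Complex.conj_ofReal,
        Complex.re_ofReal_mul, ← RCLike.re_to_complex, inner_self_eq_norm_sq]
      linarith
    · have := (Complex.abs_re_le_norm _).trans (hoff i j hij (x j) (x i))
      linarith [neg_abs_le (inner ℂ (M i j (x j)) (x i)).re]
  calc (0 : ℝ) ≤ (α - 2 * (Fintype.card ι - 1) * K) * ∑ i, a i :=
        mul_nonneg (by linarith) (Finset.sum_nonneg fun i _ => by positivity)
    _ = ∑ i, ∑ j, (-K * (a j + a i) + (if i = j then (α + 2 * K) * a i else 0)) := by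
        simp only [Finset.sum_add_distrib, ← Finset.mul_sum, Finset.sum_ite_eq, Finset.mem_univ,
          if_true, Finset.sum_const, Finset.card_univ, nsmul_eq_mul]
        ring
    _ ≤ _ := by
        simp only [Complex.re_sum]
        gcongr with i _ j _
        exact hentry i j

theorem IsPosBlockMatrix.posSemidef_of_inner
    (hM : ∀ i j u v, inner ℂ (M i j u) v = inner ℂ u (M j i v)) (h : IsPosBlockMatrix M)
    (ξ : E) : (Matrix.of fun i j => inner ℂ ξ (M i j ξ)).PosSemidef := by
  refine Matrix.PosSemidef.of_dotProduct_mulVec_nonneg ?_ fun c => ?_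
  · ext i j
    simp only [Matrix.conjTranspose_apply, Matrix.of_apply, RCLike.star_def, inner_conj_symm, hM]
  · have hform : dotProduct (star c) ((Matrix.of fun i j => inner ℂ ξ (M i j ξ)).mulVec c)
        = (starRingEnd ℂ) (∑ i, ∑ j, inner ℂ (M i j (c j • ξ)) (c i • ξ)) := by
      simp only [dotProduct, Matrix.mulVec, Matrix.of_apply, Finset.mul_sum, map_sum, map_smul,
        inner_smul_left, inner_smul_right, map_mul, Complex.conj_conj, inner_conj_symm,
        Pi.star_apply, RCLike.star_def]
      refine Finset.sum_congr rfl fun i _ => Finset.sum_congr rfl fun j _ => ?_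
      ring
    have hc := h fun i => c i • ξ
    rwa [hform, Complex.conj_eq_iff_im.mpr (Complex.le_def.mp hc).2.symm]

end BlockMatrix

section Toeplitz

variable {d : ℕ} (T : Fin d → H →L[ℂ] H)

theorem tEntry_self (α : ℂ) (i : Fin (d + 1)) : tEntry T α i i = α • 1 := dif_pos rfl

theorem tEntry_succ_zero (α : ℂ) (k : Fin d) : tEntry T α k.succ 0 = T k := by
  simp [tEntry]

theorem tEntry_zero_succ (α : ℂ) (k : Fin d) :
    tEntry T α 0 k.succ = ContinuousLinearMap.adjoint (T k) := by
  simp [tEntry]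

theorem tEntry_of_ne (α : ℂ) {i j : Fin (d + 1)} (hij : i ≠ j) :
    ∃ k, tEntry T α i j = T k ∨ tEntry T α i j = ContinuousLinearMap.adjoint (T k) := by
  unfold tEntry
  rw [dif_neg (Fin.val_ne_of_ne hij)]
  split_ifs
  exacts [⟨_, .inl rfl⟩, ⟨_, .inr rfl⟩]

theorem tEntry_adjoint (α : ℝ) (i j : Fin (d + 1)) :
    tEntry T (α : ℂ) j i = ContinuousLinearMap.adjoint (tEntry T (α : ℂ) i j) := by
  unfold tEntry
  rcases lt_trichotomy (i : ℕ) (j : ℕ) with h | h | h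
  · rw [dif_neg (by omega), dif_pos h, dif_neg (by omega), dif_neg (by omega),
      ContinuousLinearMap.adjoint_adjoint]
  · rw [dif_pos h.symm, dif_pos h, ← ContinuousLinearMap.star_eq_adjoint, star_smul, star_one,
      Complex.star_def, Complex.conj_ofReal]
  · rw [dif_neg (by omega), dif_neg (by omega), dif_neg (by omega), dif_pos h]

theorem inner_tEntry_apply_left (α : ℝ) (i j : Fin (d + 1)) (u v : H) :
    inner ℂ (tEntry T (α : ℂ) i j u) v = inner ℂ u (tEntry T (α : ℂ) j i v) := by
  rw [tEntry_adjoint T α i j, ContinuousLinearMap.adjoint_inner_right]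

variable {T}

theorem norm_inner_tEntry_apply_le {K : ℝ}
    (hT : ∀ k u v, ‖inner ℂ (T k u) v‖ ≤ K * (‖u‖ ^ 2 + ‖v‖ ^ 2)) (α : ℂ) {i j : Fin (d + 1)}
    (hij : i ≠ j) (u v : H) : ‖inner ℂ (tEntry T α i j u) v‖ ≤ K * (‖u‖ ^ 2 + ‖v‖ ^ 2) := by
  obtain ⟨k, hk | hk⟩ := tEntry_of_ne T α hij <;> rw [hk]
  · exact hT k u v
  · rw [ContinuousLinearMap.adjoint_inner_left, ← inner_conj_symm, RCLike.norm_conj, add_comm]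
    exact hT k v u

theorem isPosBlockMatrix_tEntry_of_norm_inner_le {K : ℝ}
    (hT : ∀ k u v, ‖inner ℂ (T k u) v‖ ≤ K * (‖u‖ ^ 2 + ‖v‖ ^ 2)) :
    IsPosBlockMatrix (tEntry T ((2 * d * K : ℝ) : ℂ)) :=
  isPosBlockMatrix_of_norm_inner_offDiag_le (inner_tEntry_apply_left T _) (tEntry_self T _)
    (fun _ _ hij => norm_inner_tEntry_apply_le hT _ hij) (by simp)

theorem tScalarMatrix_posSemidef {α : ℝ} (h : IsPosBlockMatrix (tEntry T (α : ℂ))) (ξ : H) :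
    (tScalarMatrix T α ξ).PosSemidef :=
  h.posSemidef_of_inner (inner_tEntry_apply_left T α) ξ

theorem norm_inner_apply_self_le_of_posSemidef {α : ℝ} {ξ : H} (hξ : ‖ξ‖ = 1)
    (h : (tScalarMatrix T α ξ).PosSemidef) (k : Fin d) : ‖inner ℂ (T k ξ) ξ‖ ≤ α := by
  have hdiag (i : Fin (d + 1)) : tScalarMatrix T α ξ i i = α := by
    simp [tScalarMatrix, tEntry_self, hξ]
  have hα : 0 ≤ α := by simpa [hdiag] using h.diag_nonneg (i := 0)
  have hminor := h.apply_mul_apply_le 0 k.succ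
  rw [hdiag, hdiag] at hminor
  simp only [tScalarMatrix, Matrix.of_apply, tEntry_zero_succ, tEntry_succ_zero,
    ContinuousLinearMap.adjoint_inner_right] at hminor
  rw [← inner_conj_symm ξ (T k ξ), Complex.mul_conj', ← Complex.ofReal_pow, ← Complex.ofReal_mul,
    Complex.real_le_real] at hminor
  nlinarith [norm_nonneg (inner ℂ (T k ξ) ξ)]

end Toeplitz

section ToeplitzModulus

variable {d : ℕ} {T : Fin d → H →L[ℂ] H}

theorem toeplitzModulus_le {α : ℝ} (hα : 0 ≤ α) (h : IsPosBlockMatrix (tEntry T (α : ℂ))) :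
    toeplitzModulus T ≤ α :=
  csInf_le ⟨0, fun _ hβ => hβ.1⟩ ⟨hα, h⟩

theorem toeplitzNumRadius_nonneg : 0 ≤ toeplitzNumRadius T :=
  Real.sInf_nonneg fun _ hβ => hβ.1

theorem norm_inner_apply_self_le_toeplitzNumRadius {ξ : H} (hξ : ‖ξ‖ = 1) (k : Fin d) :
    ‖inner ℂ (T k ξ) ξ‖ ≤ toeplitzNumRadius T := by
  set K := ∑ k, ‖T k‖
  have hT (k : Fin d) (u v : H) : ‖inner ℂ (T k u) v‖ ≤ K * (‖u‖ ^ 2 + ‖v‖ ^ 2) :=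
    (norm_inner_apply_le_opNorm_mul_add_sq (T k) u v).trans <| by
      gcongr
      exact Finset.single_le_sum (fun k _ => norm_nonneg (T k)) (Finset.mem_univ k)
  -- `sInf ∅ = 0`, so an admissible `α` must be exhibited first
  refine le_csInf ⟨2 * d * K, by positivity, fun ξ _ => ?_⟩ fun α hα => ?_
  · exact tScalarMatrix_posSemidef (isPosBlockMatrix_tEntry_of_norm_inner_le hT) ξ
  · exact norm_inner_apply_self_le_of_posSemidef hξ (hα.2 ξ hξ) k

end ToeplitzModulus

/-- for every positive integer `d` there is a constant `c_d ≥ 2` such that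
`ρ(T) ≤ c_d ω(T)` for every `d`-tuple `T` of bounded operators on any complex Hilbert space. -/
theorem exists_const_toeplitzModulus_le_mul_toeplitzNumRadius
    (d : ℕ) (hd : 0 < d) :
    ∃ c : ℝ, 2 ≤ c ∧
      ∀ (H' : Type) [NormedAddCommGroup H'] [InnerProductSpace ℂ H'] [CompleteSpace H']
        (T : Fin d → H' →L[ℂ] H'),
        toeplitzModulus T ≤ c * toeplitzNumRadius T := by
  refine ⟨2 * d, by norm_cast; omega, fun H' _ _ _ T => ?_⟩
  have hT (k : Fin d) (u v : H') :
      ‖inner ℂ (T k u) v‖ ≤ toeplitzNumRadius T * (‖u‖ ^ 2 + ‖v‖ ^ 2) :=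
    norm_inner_map_le_of_norm_inner_map_self_le _
      (norm_inner_map_self_le_of_norm_eq_one _ fun _ hξ =>
        norm_inner_apply_self_le_toeplitzNumRadius hξ k) u v
  exact toeplitzModulus_le (mul_nonneg (by positivity) toeplitzNumRadius_nonneg)
    (isPosBlockMatrix_tEntry_of_norm_inner_le hT)
end
end
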